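/- arXiv:2006.14259 — 6 statements merged into one kernel-verified Lean document; each statement's English description precedes it below -/
import Mathlib

section
/- Given an invertible dual quaternion q = p + εd (with p, d real quaternions, p ≠ 0), there exists an invertible dual number a such that a·q has real norm (i.e., the dual part of (aq)·conj(aq) vanishes). Moreover, a is determined up to a non-zero real multiple: if a and a' are two invertible dual numbers with this property, then a' = ra for some r ∈ ℝ×. -/
/-!
The dual number `a = a₁ + εa₂` is central and self-conjugate, so the norm of `a·q` is `a²·N(q)`,
and for `q = p + εd` one has `N(q) = |p|² + 2ε⟨p, d⟩`. The dual part of `a²·N(q)` is therefore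
`2a₁(a₁⟨p, d⟩ + a₂|p|²)`, so for invertible `a` the condition is a single linear equation in
`(a₁, a₂)` whose coefficient `|p|²` is non-zero: its solutions form the line spanned by
`(|p|², -⟨p, d⟩)`. Here `⟨p, d⟩` appears as `(p * star d).re`.
-/

open TrivSqZeroExt

/-- Embedding of a real quaternion as the primal part of a dual quaternion. -/
def inlQ (p : Quaternion ℝ) : Quaternion (DualNumber ℝ) :=
  ⟨inl p.re, inl p.imI, inl p.imJ, inl p.imK⟩

/-- Embedding of a real quaternion as the dual (`ε`) part of a dual quaternion. -/
def inrQ (d : Quaternion ℝ) : Quaternion (DualNumber ℝ) :=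
  ⟨inr d.re, inr d.imI, inr d.imJ, inr d.imK⟩

/-- The scalar dual number `a₁ + εa₂`, viewed as a dual quaternion. -/
def scalarD (a₁ a₂ : ℝ) : Quaternion (DualNumber ℝ) :=
  @algebraMap (DualNumber ℝ) (Quaternion (DualNumber ℝ)) inferInstance inferInstance _ (inl a₁ + inr a₂)

/-- `a·q` has real norm, i.e. the dual part of its norm vanishes. -/
def HasRealNormMultiple (a₁ a₂ : ℝ) (q : Quaternion (DualNumber ℝ)) : Prop :=
  snd (((scalarD a₁ a₂ * q) * star (scalarD a₁ a₂ * q)).re) = 0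

open Quaternion

section Components

variable (p : ℍ[ℝ])

@[simp] theorem inlQ_re : (inlQ p).re = inl p.re := rfl
@[simp] theorem inlQ_imI : (inlQ p).imI = inl p.imI := rfl
@[simp] theorem inlQ_imJ : (inlQ p).imJ = inl p.imJ := rfl
@[simp] theorem inlQ_imK : (inlQ p).imK = inl p.imK := rfl
@[simp] theorem inrQ_re : (inrQ p).re = inr p.re := rfl
@[simp] theorem inrQ_imI : (inrQ p).imI = inr p.imI := rfl
@[simp] theorem inrQ_imJ : (inrQ p).imJ = inr p.imJ := rfl
@[simp] theorem inrQ_imK : (inrQ p).imK = inr p.imK := rfl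

end Components

theorem re_mul_star_inlQ_add_inrQ (p d : ℍ[ℝ]) :
    ((inlQ p + inrQ d) * star (inlQ p + inrQ d)).re
      = inl (normSq p) + inr (2 * (p * star d).re) := by
  ext <;> simp [normSq_def'] <;> ring

theorem Quaternion.coe_mul_mul_star_coe_mul {R : Type*} [CommRing R] (a : R) (q : ℍ[R]) :
    (a * q) * star (a * q) = a ^ 2 • (q * star q) := by
  rw [star_mul, star_coe, mul_assoc, ← mul_assoc q, ← coe_commutes, ← mul_assoc, ← coe_mul,
    coe_mul_eq_smul, sq]

theorem hasRealNormMultiple_iff (a₁ a₂ : ℝ) (q : ℍ[DualNumber ℝ]) :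
    HasRealNormMultiple a₁ a₂ q ↔ snd ((inl a₁ + inr a₂) ^ 2 * (q * star q).re) = 0 := by
  have hscale := congrArg QuaternionAlgebra.re (coe_mul_mul_star_coe_mul (inl a₁ + inr a₂) q)
  rw [HasRealNormMultiple, scalarD, algebraMap_def, hscale, re_smul, smul_eq_mul]

theorem hasRealNormMultiple_inlQ_add_inrQ_iff {a₁ : ℝ} (ha : a₁ ≠ 0) (a₂ : ℝ) (p d : ℍ[ℝ]) :
    HasRealNormMultiple a₁ a₂ (inlQ p + inrQ d) ↔ a₁ * (p * star d).re + a₂ * normSq p = 0 := by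
  rw [hasRealNormMultiple_iff, re_mul_star_inlQ_add_inrQ]
  have hsnd : snd ((inl a₁ + inr a₂) ^ 2 * (inl (normSq p) + inr (2 * (p * star d).re)))
      = 2 * a₁ * (a₁ * (p * star d).re + a₂ * normSq p) := by
    simp [sq]
    ring
  rw [hsnd, mul_eq_zero_iff_left (mul_ne_zero two_ne_zero ha)]

theorem exists_eq_mul_of_linear_eq_zero {K : Type*} [Field K] {M N a₁ a₂ b₁ b₂ : K}
    (hN : N ≠ 0) (ha : a₁ ≠ 0) (hb : b₁ ≠ 0)
    (hA : a₁ * M + a₂ * N = 0) (hB : b₁ * M + b₂ * N = 0) :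
    ∃ r : K, r ≠ 0 ∧ b₁ = r * a₁ ∧ b₂ = r * a₂ := by
  refine ⟨b₁ / a₁, div_ne_zero hb ha, (div_mul_cancel₀ b₁ ha).symm, ?_⟩
  field_simp
  apply mul_right_cancel₀ hN
  linear_combination a₁ * hB - b₁ * hA

/-- For an invertible dual quaternion `q = p + εd` (`p ≠ 0`) there is an
invertible dual number `a` such that `a·q` has real norm, and `a` is unique up
to a non-zero real multiple. -/
theorem exists_dual_scalar_real_norm (p d : Quaternion ℝ) (hp : p ≠ 0) :
    (∃ a₁ a₂ : ℝ, a₁ ≠ 0 ∧ HasRealNormMultiple a₁ a₂ (inlQ p + inrQ d)) ∧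
    (∀ a₁ a₂ b₁ b₂ : ℝ, a₁ ≠ 0 → b₁ ≠ 0 →
      HasRealNormMultiple a₁ a₂ (inlQ p + inrQ d) →
      HasRealNormMultiple b₁ b₂ (inlQ p + inrQ d) →
      ∃ r : ℝ, r ≠ 0 ∧ b₁ = r * a₁ ∧ b₂ = r * a₂) := by
  have hN : normSq p ≠ 0 := normSq_ne_zero.mpr hp
  refine ⟨⟨normSq p, -(p * star d).re, hN, ?_⟩, fun a₁ a₂ b₁ b₂ ha hb hA hB => ?_⟩
  · rw [hasRealNormMultiple_inlQ_add_inrQ_iff hN]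
    ring
  · rw [hasRealNormMultiple_inlQ_add_inrQ_iff ha] at hA
    rw [hasRealNormMultiple_inlQ_add_inrQ_iff hb] at hB
    exact exists_eq_mul_of_linear_eq_zero hN ha hb hA hB
end

section
/- For the curves h(ω) = cos(ω/2) + sin(ω/2)k + (p/2)ω·ε(sin(ω/2) − cos(ω/2)k) (helical motion) and d(ω) = cos(ω/2) + sin(ω/2)k + (p/2)sin(ω)·ε(sin(ω/2) − cos(ω/2)k) (vertical Darboux motion with amplitude c = p) in the dual quaternions, one has h(0) = d(0), h'(0) = d'(0) = (1/2)k − (p/2)εk, h''(0) = d''(0) = −1/4 + (p/2)ε, but h'''(0) ≠ d'''(0); specifically h'''(0) = −(1/8)k + (3p/8)εk and d'''(0) = −(1/8)k + (7p/8)εk. -/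
/-!
Both curves have the form `r(ω) (1 - f(ω) ε k)` with `r(ω) = cos (ω/2) + sin (ω/2) k`, where
`f(ω) = p ω / 2` for the helical and `f(ω) = (p / 2) sin ω` for the Darboux motion. Since
`r' = (k/2) r`, Leibniz' rule gives
`(r (1 - f ε k))⁽ⁿ⁾(0) = (k/2)ⁿ - ∑ᵢ C(n,i) f⁽ⁱ⁾(0) (k/2)ⁿ⁻ⁱ ε k`,
so the two motions agree to the order to which `p ω / 2` and `(p / 2) sin ω` agree at `0`:
to second order, while the third derivatives of `f` at `0` differ by `p / 2`.
-/

open TrivSqZeroExt Real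

noncomputable section

/-- The quaternion unit `k`. -/
def kQ : Quaternion ℝ := ⟨0, 0, 0, 1⟩

/-- The helical motion `h(ω)` with pitch `p`, as a curve of dual quaternions. -/
def helical (p : ℝ) (ω : ℝ) : DualNumber (Quaternion ℝ) :=
  inl ((cos (ω / 2) : ℝ) + (sin (ω / 2) : ℝ) • kQ)
    + inr ((p / 2 * ω) • ((sin (ω / 2) : ℝ) • (1 : Quaternion ℝ) - (cos (ω / 2)) • kQ))

/-- The vertical Darboux motion `d(ω)` with amplitude `p`. -/
def darboux (p : ℝ) (ω : ℝ) : DualNumber (Quaternion ℝ) :=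
  inl ((cos (ω / 2) : ℝ) + (sin (ω / 2) : ℝ) • kQ)
    + inr ((p / 2 * sin ω) • ((sin (ω / 2) : ℝ) • (1 : Quaternion ℝ) - (cos (ω / 2)) • kQ))

section
variable {A : Type*} [NormedRing A] [NormedAlgebra ℝ A]

theorem iteratedDeriv_eq_pow_mul_of_hasDerivAt_mul {y : ℝ → A} {c : A}
    (hy : ∀ t, HasDerivAt y (c * y t) t) (n : ℕ) :
    iteratedDeriv n y = fun t => c ^ n * y t := by
  induction n with
  | zero => simp
  | succ n ih =>
    rw [iteratedDeriv_succ, ih]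
    funext t
    rw [((hy t).const_mul (c ^ n)).deriv, pow_succ, mul_assoc]

theorem contDiff_of_hasDerivAt_mul {y : ℝ → A} {c : A}
    (hy : ∀ t, HasDerivAt y (c * y t) t) (n : ℕ) : ContDiff ℝ n y := by
  induction n with
  | zero => exact contDiff_zero.2 (continuous_iff_continuousAt.2 fun t => (hy t).continuousAt)
  | succ n ih =>
    rw [Nat.cast_succ, contDiff_succ_iff_deriv]
    refine ⟨fun t => (hy t).differentiableAt, by simp, ?_⟩
    rw [show deriv y = fun t => c * y t from funext fun t => (hy t).deriv]
    exact contDiff_const.mul ih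

theorem hasDerivAt_cos_smul_one_add_sin_smul {K : A} (hK : K * K = -1) (a t : ℝ) :
    HasDerivAt (fun s => cos (a * s) • (1 : A) + sin (a * s) • K)
      ((a • K) * (cos (a * t) • (1 : A) + sin (a * t) • K)) t := by
  have hc : HasDerivAt (fun s => cos (a * s)) (-sin (a * t) * a) t := by
    simpa using ((hasDerivAt_id t).const_mul a).cos
  have hs : HasDerivAt (fun s => sin (a * s)) (cos (a * t) * a) t := by
    simpa using ((hasDerivAt_id t).const_mul a).sin
  refine ((hc.smul_const (1 : A)).add (hs.smul_const K)).congr_deriv ?_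
  simp only [mul_add, mul_smul_comm, smul_mul_assoc, mul_one, hK]
  module

theorem iteratedDeriv_smul_of_hasDerivAt_mul {f : ℝ → ℝ} {G : ℝ → A} {c : A} {n : ℕ}
    (hf : ContDiff ℝ n f) (hG : ∀ t, HasDerivAt G (c * G t) t) (t : ℝ) :
    iteratedDeriv n (fun s => f s • G s) t =
      ∑ i ∈ Finset.range (n + 1),
        (n.choose i * iteratedDeriv i f t) • (c ^ (n - i) * G t) := by
  have h_mul : (fun s => f s • G s) = fun s => f s • (1 : A) * G s := by
    simp only [smul_mul_assoc, one_mul]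
  rw [h_mul, iteratedDeriv_fun_mul (f := fun s => f s • (1 : A))
    (hf.smul contDiff_const).contDiffAt (contDiff_of_hasDerivAt_mul hG n).contDiffAt]
  refine Finset.sum_congr rfl fun i hi => ?_
  rw [iteratedDeriv_eq_pow_mul_of_hasDerivAt_mul hG,
    iteratedDeriv_smul_const ((hf.of_le ?_).contDiffAt)]
  · rw [mul_assoc, smul_mul_assoc, one_mul, mul_smul, Nat.cast_smul_eq_nsmul, nsmul_eq_mul]
  · exact_mod_cast Finset.mem_range_succ_iff.mp hi

end

open scoped Quaternion

@[simp] theorem kQ_re : kQ.re = 0 := rfl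
@[simp] theorem kQ_imI : kQ.imI = 0 := rfl
@[simp] theorem kQ_imJ : kQ.imJ = 0 := rfl
@[simp] theorem kQ_imK : kQ.imK = 1 := rfl

theorem kQ_mul_kQ : kQ * kQ = -1 := by
  ext <;> simp [Quaternion.re_mul, Quaternion.imI_mul, Quaternion.imJ_mul, Quaternion.imK_mul]

def axialMotion (f : ℝ → ℝ) (ω : ℝ) : DualNumber (Quaternion ℝ) :=
  inl ((cos (ω / 2) : ℝ) + (sin (ω / 2) : ℝ) • kQ)
    + inr (f ω • ((sin (ω / 2) : ℝ) • (1 : Quaternion ℝ) - (cos (ω / 2)) • kQ))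

def kRotation (ω : ℝ) : DualNumber (Quaternion ℝ) :=
  cos (ω / 2) • 1 + sin (ω / 2) • inl kQ

theorem kRotation_zero : kRotation 0 = 1 := by simp [kRotation]

theorem hasDerivAt_kRotation (t : ℝ) :
    HasDerivAt kRotation (((1 / 2 : ℝ) • inl kQ) * kRotation t) t := by
  have hK : (inl kQ : DualNumber ℍ[ℝ]) * inl kQ = -1 := by
    rw [inl_mul_inl, kQ_mul_kQ, inl_neg, inl_one]
  have h := hasDerivAt_cos_smul_one_add_sin_smul hK (1 / 2) t
  simp only [one_div_mul_eq_div] at h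
  exact h

theorem axialMotion_eq (f : ℝ → ℝ) (ω : ℝ) :
    axialMotion f ω = kRotation ω + f ω • (kRotation ω * inr (-kQ)) := by
  ext <;> simp [axialMotion, kRotation, Quaternion.re_mul, Quaternion.imI_mul, Quaternion.imJ_mul,
    Quaternion.imK_mul]

theorem iteratedDeriv_axialMotion_zero {f : ℝ → ℝ} {n : ℕ} (hf : ContDiff ℝ n f) :
    iteratedDeriv n (axialMotion f) 0 = ((1 / 2 : ℝ) • inl kQ) ^ n +
      ∑ i ∈ Finset.range (n + 1),
        (n.choose i * iteratedDeriv i f 0) •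
          (((1 / 2 : ℝ) • inl kQ) ^ (n - i) * inr (-kQ)) := by
  have hG (t : ℝ) : HasDerivAt (fun s => kRotation s * inr (-kQ))
      (((1 / 2 : ℝ) • inl kQ) * (kRotation t * inr (-kQ))) t := by
    simpa only [mul_assoc] using
      HasDerivAt.mul_const (𝕜 := ℝ) (hasDerivAt_kRotation t) (inr (-kQ) : DualNumber ℍ[ℝ])
  have hfG : ContDiff ℝ n fun s => f s • (kRotation s * inr (-kQ)) :=
    hf.smul (contDiff_of_hasDerivAt_mul (A := DualNumber ℍ[ℝ]) hG n)
  rw [funext (axialMotion_eq f), iteratedDeriv_fun_add (f := kRotation)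
    (contDiff_of_hasDerivAt_mul hasDerivAt_kRotation n).contDiffAt hfG.contDiffAt,
    iteratedDeriv_eq_pow_mul_of_hasDerivAt_mul hasDerivAt_kRotation,
    iteratedDeriv_smul_of_hasDerivAt_mul (A := DualNumber ℍ[ℝ]) hf hG]
  simp only [kRotation_zero, mul_one, one_mul]

theorem iteratedDeriv_helical_zero (p : ℝ) (n : ℕ) :
    iteratedDeriv n (helical p) 0 =
      ((1 / 2 : ℝ) • inl kQ) ^ n +
        (n * (p / 2)) • (((1 / 2 : ℝ) • inl kQ) ^ (n - 1) * inr (-kQ)) := by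
  have hf : ContDiff ℝ n fun ω => p / 2 * ω := by fun_prop
  rw [show helical p = axialMotion (fun ω => p / 2 * ω) from rfl,
    iteratedDeriv_axialMotion_zero hf]
  rcases n with _ | n
  · simp
  · simp only [iteratedDeriv_const_mul_field (p / 2) (fun ω => ω), iteratedDeriv_fun_id_zero]
    simp [Finset.sum_ite_eq']

theorem iteratedDeriv_darboux_zero (p : ℝ) (n : ℕ) :
    iteratedDeriv n (darboux p) 0 = ((1 / 2 : ℝ) • inl kQ) ^ n +
      ∑ i ∈ Finset.range (n + 1),
        (n.choose i * (p / 2 * iteratedDeriv i sin 0)) •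
          (((1 / 2 : ℝ) • inl kQ) ^ (n - i) * inr (-kQ)) := by
  have hf : ContDiff ℝ n fun ω => p / 2 * sin ω := by fun_prop
  rw [show darboux p = axialMotion (fun ω => p / 2 * sin ω) from rfl,
    iteratedDeriv_axialMotion_zero hf]
  simp only [iteratedDeriv_const_mul_field]

theorem helical_jet (p : ℝ) :
    iteratedDeriv 1 (helical p) 0 = inl ((1 / 2 : ℝ) • kQ) + inr (-((p / 2) • kQ)) ∧
    iteratedDeriv 2 (helical p) 0
      = inl ((-(1 / 4) : ℝ) • (1 : Quaternion ℝ)) + inr ((p / 2) • (1 : Quaternion ℝ)) ∧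
    iteratedDeriv 3 (helical p) 0 = inl ((-(1 / 8) : ℝ) • kQ) + inr ((3 * p / 8) • kQ) := by
  refine ⟨?_, ?_, ?_⟩ <;>
  · rw [iteratedDeriv_helical_zero]
    simp only [← inl_smul, inl_pow, inl_mul_inr]
    ext : 1 <;> simp [pow_succ, kQ_mul_kQ] <;> module

theorem darboux_jet (p : ℝ) :
    iteratedDeriv 1 (darboux p) 0 = inl ((1 / 2 : ℝ) • kQ) + inr (-((p / 2) • kQ)) ∧
    iteratedDeriv 2 (darboux p) 0
      = inl ((-(1 / 4) : ℝ) • (1 : Quaternion ℝ)) + inr ((p / 2) • (1 : Quaternion ℝ)) ∧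
    iteratedDeriv 3 (darboux p) 0 = inl ((-(1 / 8) : ℝ) • kQ) + inr ((7 * p / 8) • kQ) := by
  refine ⟨?_, ?_, ?_⟩ <;>
  · rw [iteratedDeriv_darboux_zero]
    simp only [← inl_smul, inl_pow, inl_mul_inr]
    ext : 1 <;> simp [Finset.sum_range_succ, iteratedDeriv_succ', pow_succ, kQ_mul_kQ] <;> module

/-- The helical motion and the vertical Darboux motion of equal pitch/amplitude
agree at `ω = 0` up to second derivatives, but their third derivatives differ. -/
theorem helical_darboux_second_order_contact (p : ℝ) (hp : p ≠ 0) :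
    helical p 0 = darboux p 0 ∧
    iteratedDeriv 1 (helical p) 0 = iteratedDeriv 1 (darboux p) 0 ∧
    iteratedDeriv 1 (helical p) 0
      = inl ((1 / 2 : ℝ) • kQ) + inr (-((p / 2) • kQ)) ∧
    iteratedDeriv 2 (helical p) 0 = iteratedDeriv 2 (darboux p) 0 ∧
    iteratedDeriv 2 (helical p) 0
      = inl ((-(1 / 4) : ℝ) • (1 : Quaternion ℝ)) + inr ((p / 2) • (1 : Quaternion ℝ)) ∧
    iteratedDeriv 3 (helical p) 0
      = inl ((-(1 / 8) : ℝ) • kQ) + inr ((3 * p / 8) • kQ) ∧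
    iteratedDeriv 3 (darboux p) 0
      = inl ((-(1 / 8) : ℝ) • kQ) + inr ((7 * p / 8) • kQ) ∧
    iteratedDeriv 3 (helical p) 0 ≠ iteratedDeriv 3 (darboux p) 0 := by
  obtain ⟨h1, h2, h3⟩ := helical_jet p
  obtain ⟨d1, d2, d3⟩ := darboux_jet p
  refine ⟨by simp [helical, darboux], h1.trans d1.symm, h1, h2.trans d2.symm, h2, h3, d3, ?_⟩
  rw [h3, d3]
  intro h
  have h_imK : 3 * p / 8 = 7 * p / 8 := by simpa using congrArg (fun z => z.snd.imK) h
  exact hp (by linarith)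

end
end

section
/- For any real numbers k and κ, there exist real numbers a and φ such that the graph of x ↦ a·sin(x) has slope k and signed curvature κ at the point with abscissa φ; i.e., a·cos(φ) = k and −a·sin(φ)/(1 + a²cos²(φ))^(3/2) = κ. -/
open Real

/-! Choose `(a, φ)` as polar coordinates of the point `(k, -κ (1 + k²)^{3/2})`. Then
`a cos φ = k`, so the curvature denominator `(1 + a² cos² φ)^{3/2}` is `(1 + k²)^{3/2}`,
and it cancels against the prescribed value of `a sin φ`. -/

theorem exists_mul_cos_eq_and_mul_sin_eq (x y : ℝ) :
    ∃ r θ : ℝ, r * cos θ = x ∧ r * sin θ = y :=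
  ⟨‖(⟨x, y⟩ : ℂ)‖, Complex.arg ⟨x, y⟩, Complex.norm_mul_cos_arg _, Complex.norm_mul_sin_arg _⟩

/-- For any prescribed slope `k` and signed curvature `κ`, some point on the
graph of `x ↦ a·sin x` (for a suitable `a`) realizes them. -/
theorem exists_sine_with_slope_and_curvature (k κ : ℝ) :
    ∃ a φ : ℝ, a * cos φ = k ∧
      -(a * sin φ) / (1 + a ^ 2 * cos φ ^ 2) ^ ((3 : ℝ) / 2) = κ := by
  obtain ⟨a, φ, hcos, hsin⟩ :=
    exists_mul_cos_eq_and_mul_sin_eq k (-κ * (1 + k ^ 2) ^ ((3 : ℝ) / 2))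
  refine ⟨a, φ, hcos, ?_⟩
  have hpos : 0 < (1 + k ^ 2) ^ ((3 : ℝ) / 2) := by positivity
  rw [← mul_pow, hcos, hsin]
  field_simp
end

section
/- Let c(t) = t² + 1 + ε(γ₁t + γ₀ + b·j·t + a·i) be a polynomial with dual quaternion coefficients, where a > b ≥ 0 are reals and γ₀, γ₁ ∈ ℝ. Then for each choice of sign and each pair (v₂, v₃) ∈ ℝ², setting p₁ = ±√(a²−b²)/a, p₂ = 0, p₃ = −b/a, u₂ = −v₂ + b, u₃ = −v₃, u₀ = γ₁/2 ∓ √(a²−b²)/2, u₁ = −v₁ = ±(aγ₀ − 2bv₃)/(2√(a²−b²)), v₀ = γ₁/2 ± √(a²−b²)/2, the polynomials F₁ = t + p₁i + p₂j + p₃k + ε(u₀ + u₁i + u₂j + u₃k) and F₂ = t − p₁i − p₂j − p₃k + ε(v₀ + v₁i + v₂j + v₃k) satisfy c = F₁·F₂. -/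
open TrivSqZeroExt Polynomial

noncomputable section

/-- A real quaternion viewed as the primal part of a dual quaternion. -/
def pQ (q : Quaternion ℝ) : Quaternion (DualNumber ℝ) :=
  ⟨inl q.re, inl q.imI, inl q.imJ, inl q.imK⟩

/-- A real quaternion multiplied by `ε`, i.e. the dual part of a dual quaternion. -/
def eQ (q : Quaternion ℝ) : Quaternion (DualNumber ℝ) :=
  ⟨inr q.re, inr q.imI, inr q.imJ, inr q.imK⟩

/-!
Since `ε² = 0`, `(X + p + εu)(X + q + εv) = X² + (pq + ε(pv + uq)) + (p + q + ε(u + v))X`.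
Here `q = -p` with `p = (s i - b k)/a`, `s = σ√(a² - b²)`, a pure quaternion of norm `1` as soon
as `s² = a² - b²`, so `pq = 1`. With `m = σ(aγ₀ - 2bv₃)/(2√(a² - b²))` the `i`-coefficient of `u`,
the dual constant term `pv + uq = γ₀ + a i` comes down to `s² = a² - b²` and `2ms = aγ₀ - 2bv₃`.
-/

lemma pQ_zero : pQ 0 = 0 := by
  ext : 1 <;> rfl

lemma pQ_add (p q : Quaternion ℝ) : pQ (p + q) = pQ p + pQ q := by
  ext : 1 <;> simp <;> simp [pQ]

lemma eQ_add (p q : Quaternion ℝ) : eQ (p + q) = eQ p + eQ q := by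
  ext : 1 <;> simp <;> simp [eQ, TrivSqZeroExt.ext_iff]

lemma pQ_mul (p q : Quaternion ℝ) : pQ (p * q) = pQ p * pQ q := by
  ext : 1 <;> simp <;> simp [pQ]

lemma pQ_mul_eQ (p q : Quaternion ℝ) : pQ p * eQ q = eQ (p * q) := by
  ext : 1 <;> simp <;> simp [pQ, eQ, TrivSqZeroExt.ext_iff] <;> ring

lemma eQ_mul_pQ (p q : Quaternion ℝ) : eQ p * pQ q = eQ (p * q) := by
  ext : 1 <;> simp <;> simp [pQ, eQ, TrivSqZeroExt.ext_iff]

lemma eQ_mul_eQ (p q : Quaternion ℝ) : eQ p * eQ q = 0 := by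
  ext : 1 <;> simp <;> simp [eQ] <;> rfl

lemma pQ_zero_add_eQ (w : Quaternion ℝ) : pQ 0 + eQ w = eQ w := by
  rw [pQ_zero]
  -- `rw [zero_add]` cannot see through the instance arguments of `Quaternion (DualNumber ℝ)`
  exact zero_add (eQ w)

lemma pQ_add_eQ_mul (p u q v : Quaternion ℝ) :
    (pQ p + eQ u) * (pQ q + eQ v) = pQ (p * q) + eQ (p * v + u * q) := by
  rw [add_mul, mul_add, mul_add, ← pQ_mul, pQ_mul_eQ, eQ_mul_pQ, eQ_mul_eQ, eQ_add]
  abel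

lemma pQ_add_eQ_add (p u q v : Quaternion ℝ) :
    (pQ p + eQ u) + (pQ q + eQ v) = pQ (p + q) + eQ (u + v) := by
  rw [pQ_add, eQ_add]
  abel

lemma X_add_C_mul_X_add_C {R : Type*} [Ring R] (q₁ q₂ : R) :
    (X + C q₁) * (X + C q₂) = X ^ 2 + C (q₁ * q₂) + C (q₁ + q₂) * X := by
  rw [mul_add, add_mul, add_mul, C_mul, C_add, add_mul, (commute_X (C q₂)).eq, ← sq]
  abel

lemma X_add_C_pQ_add_eQ_mul_of {p u q v d w : Quaternion ℝ} (hpq : p * q = 1)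
    (hsum : p + q = 0) (hd : p * v + u * q = d) (hw : u + v = w) :
    (X + C (pQ p + eQ u)) * (X + C (pQ q + eQ v)) = X ^ 2 + C (pQ 1 + eQ d) + C (eQ w) * X := by
  rw [X_add_C_mul_X_add_C, pQ_add_eQ_mul, pQ_add_eQ_add, hpq, hsum, hd, hw, pQ_zero_add_eQ]

lemma elliptic_primal_add (a b s : ℝ) :
    (⟨0, s / a, 0, -b / a⟩ : Quaternion ℝ) + ⟨0, -(s / a), 0, b / a⟩ = 0 := by
  ext <;> simp [neg_div]

lemma elliptic_dual_add (γ₁ s m v₂ v₃ b : ℝ) :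
    (⟨γ₁ / 2 - s / 2, m, -v₂ + b, -v₃⟩ : Quaternion ℝ) + ⟨γ₁ / 2 + s / 2, -m, v₂, v₃⟩
      = ⟨γ₁, 0, b, 0⟩ := by
  ext <;> simp

lemma elliptic_primal_mul {a b s : ℝ} (ha : a ≠ 0) (hs : s ^ 2 = a ^ 2 - b ^ 2) :
    (⟨0, s / a, 0, -b / a⟩ : Quaternion ℝ) * ⟨0, -(s / a), 0, b / a⟩ = 1 := by
  ext <;> simp <;> field_simp
  case re => linear_combination hs
  case imJ => ring

lemma elliptic_dual_mul {a b s : ℝ} (γ₀ γ₁ m v₂ v₃ : ℝ) (ha : a ≠ 0) (hs : s ^ 2 = a ^ 2 - b ^ 2)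
    (hm : 2 * m * s = a * γ₀ - 2 * b * v₃) :
    (⟨0, s / a, 0, -b / a⟩ : Quaternion ℝ) * ⟨γ₁ / 2 + s / 2, -m, v₂, v₃⟩
      + (⟨γ₁ / 2 - s / 2, m, -v₂ + b, -v₃⟩ : Quaternion ℝ) * ⟨0, -(s / a), 0, b / a⟩
      = ⟨γ₀, a, 0, 0⟩ := by
  ext <;> simp <;> field_simp
  case re => linear_combination hm
  case imI => linear_combination 2 * hs
  all_goals ring

/-- Factorizations of the elliptic translation polynomial
`c = t² + 1 + ε(γ₁t + γ₀ + b·j·t + a·i)`: for each sign `σ = ±1` and each pair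
`(v₂, v₃)`, the stated linear polynomials `F₁`, `F₂` satisfy `c = F₁·F₂`. -/
theorem elliptic_translation_factorization
    (a b γ₀ γ₁ v₂ v₃ σ : ℝ) (hba : b < a) (hb : 0 ≤ b) (hσ : σ = 1 ∨ σ = -1) :
    (X ^ 2 + C (pQ 1 + eQ ⟨γ₀, a, 0, 0⟩) + C (eQ ⟨γ₁, 0, b, 0⟩) * X :
        Polynomial (Quaternion (DualNumber ℝ)))
    = (X + C (pQ ⟨0, σ * Real.sqrt (a ^ 2 - b ^ 2) / a, 0, -b / a⟩
          + eQ ⟨γ₁ / 2 - σ * Real.sqrt (a ^ 2 - b ^ 2) / 2,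
                σ * (a * γ₀ - 2 * b * v₃) / (2 * Real.sqrt (a ^ 2 - b ^ 2)),
                -v₂ + b, -v₃⟩))
      * (X + C (pQ ⟨0, -(σ * Real.sqrt (a ^ 2 - b ^ 2) / a), 0, b / a⟩
          + eQ ⟨γ₁ / 2 + σ * Real.sqrt (a ^ 2 - b ^ 2) / 2,
                -(σ * (a * γ₀ - 2 * b * v₃) / (2 * Real.sqrt (a ^ 2 - b ^ 2))),
                v₂, v₃⟩)) := by
  have ha : a ≠ 0 := (hb.trans_lt hba).ne'
  have hab : 0 < a ^ 2 - b ^ 2 := by nlinarith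
  have hσ2 : σ ^ 2 = 1 := by rcases hσ with rfl | rfl <;> norm_num
  have hs : (σ * Real.sqrt (a ^ 2 - b ^ 2)) ^ 2 = a ^ 2 - b ^ 2 := by
    rw [mul_pow, hσ2, one_mul, Real.sq_sqrt hab.le]
  have hm : 2 * (σ * (a * γ₀ - 2 * b * v₃) / (2 * Real.sqrt (a ^ 2 - b ^ 2)))
      * (σ * Real.sqrt (a ^ 2 - b ^ 2)) = a * γ₀ - 2 * b * v₃ := by
    have hr : Real.sqrt (a ^ 2 - b ^ 2) ≠ 0 := (Real.sqrt_pos.mpr hab).ne'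
    field_simp
    linear_combination (a * γ₀ - 2 * b * v₃) * hσ2
  exact (X_add_C_pQ_add_eQ_mul_of (elliptic_primal_mul ha hs) (elliptic_primal_add _ _ _)
    (elliptic_dual_mul _ _ _ _ _ ha hs hm) (elliptic_dual_add _ _ _ _ _ _)).symm

end
end

section
/- Verification of a factorization: with F₁ = t + (√3·i − k)/2 − ε(i − 3j + √3·k)/3, F₂ = t − (√3·i − k)/2 + ε(3√3 + i + √3·k)/3, G₁ = t − (√3·i + k)/2 + ε(3√3 + i + 3j − √3·k)/3, G₂ = t + (√3·i + k)/2 + ε(−i + √3·k)/3, one has F₁·F₂ = G₁·G₂ = t² + 1 + ε(√3·t + j·t + 2i). -/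
open TrivSqZeroExt Polynomial

noncomputable section

namespace Polynomial

theorem X_add_C_mul_X_add_C_eq {R : Type*} [Ring R] {a b p s : R} (hp : a * b = p)
    (hs : a + b = s) : (X + C a) * (X + C b) = X ^ 2 + C p + C s * X := by
  rw [← hp, ← hs, add_mul, mul_add, mul_add, sq, ← C_mul, X_mul_C, C_add, add_mul]
  abel

end Polynomial

/-- Verification of the two factorizations `F₁·F₂ = G₁·G₂ = t² + 1 + ε(√3·t + j·t + 2i)`
from the elliptic translation example. -/
theorem example_factorizations :
    ((X + C (pQ ⟨0, Real.sqrt 3 / 2, 0, -(1 / 2)⟩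
        + eQ ⟨0, -(1 / 3), 1, -(Real.sqrt 3 / 3)⟩))
      * (X + C (pQ ⟨0, -(Real.sqrt 3 / 2), 0, 1 / 2⟩
        + eQ ⟨Real.sqrt 3, 1 / 3, 0, Real.sqrt 3 / 3⟩)) :
        Polynomial (Quaternion (DualNumber ℝ)))
      = X ^ 2 + C (pQ 1 + eQ ⟨0, 2, 0, 0⟩) + C (eQ ⟨Real.sqrt 3, 0, 1, 0⟩) * X ∧
    ((X + C (pQ ⟨0, -(Real.sqrt 3 / 2), 0, -(1 / 2)⟩
        + eQ ⟨Real.sqrt 3, 1 / 3, 1, -(Real.sqrt 3 / 3)⟩))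
      * (X + C (pQ ⟨0, Real.sqrt 3 / 2, 0, 1 / 2⟩
        + eQ ⟨0, -(1 / 3), 0, Real.sqrt 3 / 3⟩)) :
        Polynomial (Quaternion (DualNumber ℝ)))
      = X ^ 2 + C (pQ 1 + eQ ⟨0, 2, 0, 0⟩) + C (eQ ⟨Real.sqrt 3, 0, 1, 0⟩) * X := by
  refine ⟨X_add_C_mul_X_add_C_eq ?_ ?_, X_add_C_mul_X_add_C_eq ?_ ?_⟩ <;> ext : 1 <;>
    simp only [Quaternion.re_add, Quaternion.imI_add, Quaternion.imJ_add, Quaternion.imK_add,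
      Quaternion.re_mul, Quaternion.imI_mul, Quaternion.imJ_mul, Quaternion.imK_mul] <;>
    -- The literals `⟨_, _, _, _⟩` have type `ℍ[ℝ,-1,0,-1]`, not `ℍ[ℝ]`, so lemmas about `pQ q`
    -- do not rewrite under them; unfolding `pQ` and `eQ` lets the projections reduce instead.
    simp only [pQ, eQ, Quaternion.re_one, Quaternion.imI_one, Quaternion.imJ_one,
      Quaternion.imK_one] <;>
    ext <;> simp <;> ring_nf <;> norm_num

end
end

section
/- Let c = p + εd ∈ DH[t] be a quadratic polynomial whose primal part p has no real polynomial factor of positive degree and whose norm satisfies p·conj(p) = s² for an irreducible monic quadratic s ∈ ℝ[t]. If c admits a factorization c = F₁F₂ into polynomials F₁, F₂ of degree 1 in DH[t] whose norms are quadratic polynomials with dual coefficients of the form s + ελᵢ with λᵢ ∈ ℝ[t], then s divides the real polynomial p·conj(d) + d·conj(p); equivalently, the dual part of the norm polynomial c·conj(c) is divisible by s. -/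
open TrivSqZeroExt Polynomial

noncomputable section

/-- Quaternion conjugation of a polynomial, applied coefficientwise. -/
def pconj (f : Polynomial (Quaternion (DualNumber ℝ))) :
    Polynomial (Quaternion (DualNumber ℝ)) :=
  f.sum fun n a => C (star a) * X ^ n

/-!
Compute the norm `c·conj c` in two ways. From `c = p + εd` and `ε² = 0` it is
`p·conj p + ε(p·conj d + d·conj p) = s² + ε(p·conj d + d·conj p)`. From `c = F₁F₂`, since
the norm `s + ελ₂` of `F₂` is central, it is `(s + ελ₂)(s + ελ₁) = s² + ε·s(λ₁ + λ₂)`.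
Hence `ε(p·conj d + d·conj p) = ε·s(λ₁ + λ₂)`, and `ε` cancels because both sides have
primal coefficients.
-/

open DualNumber Quaternion MulOpposite

theorem add_mul_add_of_mul_self_eq_zero {R : Type*} [Ring R] {e : R} (he : ∀ x, Commute e x)
    (he2 : e * e = 0) (a b c d : R) :
    (a + e * b) * (c + e * d) = a * c + e * (a * d + b * c) := by
  have hebed : e * b * (e * d) = 0 := by
    rw [mul_assoc, (he b).symm.left_comm, ← mul_assoc, he2, zero_mul]
  rw [add_mul, mul_add, mul_add, (he a).symm.left_comm, hebed, add_zero, mul_add, mul_assoc]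
  abel

theorem mul_mul_mul_eq_of_commute {M : Type*} [Monoid M] {a b a' b' : M}
    (h : Commute a (b * b')) : a * b * (b' * a') = b * b' * (a * a') := by
  rw [mul_assoc, ← mul_assoc b, ← mul_assoc a, h.eq, mul_assoc]

namespace Polynomial

theorem commute_map_algebraMap {K A : Type*} [CommSemiring K] [Semiring A] [Algebra K A]
    (r : K[X]) (f : A[X]) : Commute (r.map (algebraMap K A)) f :=
  letI := Polynomial.algebra K A
  Algebra.commutes r f

section StarAntiHom

variable {A : Type*} [Semiring A] [StarRing A]

variable (A) in
def starAntiHom : A[X] →+* A[X]ᵐᵒᵖ :=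
  (opRingEquiv A).symm.toRingHom.comp (mapRingHom (starRingEquiv : A ≃+* Aᵐᵒᵖ).toRingHom)

theorem coeff_unop_starAntiHom (f : A[X]) (n : ℕ) :
    (unop (starAntiHom A f)).coeff n = star (f.coeff n) := by
  have h := coeff_opRingEquiv (op (unop (starAntiHom A f))) n
  simp only [starAntiHom] at h ⊢
  simp only [op_unop, RingEquiv.toRingHom_eq_coe, RingHom.coe_comp, RingHom.coe_coe,
    Function.comp_apply, RingEquiv.apply_symm_apply, coe_mapRingHom, coeff_map,
    starRingEquiv_apply] at h
  exact congrArg unop h.symm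

theorem unop_starAntiHom_C (a : A) : unop (starAntiHom A (C a)) = C (star a) := by
  simp [starAntiHom]

theorem unop_starAntiHom_eq_sum (f : A[X]) :
    unop (starAntiHom A f) = f.sum fun n a => C (star a) * X ^ n := by
  ext n
  simp only [coeff_unop_starAntiHom, sum_def, finsetSum_coeff, coeff_C_mul_X_pow,
    Finset.sum_ite_eq]
  split_ifs with h
  · rfl
  · rw [notMem_support_iff.mp h, star_zero]

end StarAntiHom

end Polynomial

namespace Quaternion

variable (R : Type*) [CommRing R]

def primalHom : ℍ[R] →+* ℍ[R[ε]] :=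
  (dualNumberEquiv.symm : ℍ[R][ε] ≃ₐ[R] ℍ[R[ε]]).toRingHom.comp (TrivSqZeroExt.inlHom _ _)

variable {R}

theorem primalHom_apply (q : ℍ[R]) : primalHom R q = dualNumberEquiv.symm (inl q) := rfl

theorem star_primalHom (q : ℍ[R]) : star (primalHom R q) = primalHom R (star q) := by
  ext <;> simp [primalHom_apply]

theorem coe_eps_mul_primalHom (q : ℍ[R]) :
    ((ε : R[ε]) : ℍ[R[ε]]) * primalHom R q = dualNumberEquiv.symm (inr q) := by
  change dualNumberEquiv.symm (inr (1 : ℍ[R])) * dualNumberEquiv.symm (inl q) = _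
  rw [← map_mul, inr_mul_inl, smul_eq_mul_unop, unop_op, one_mul]

theorem map_algebraMap_mem_lifts_primalHom (r : R[X]) :
    r.map (algebraMap R ℍ[R[ε]]) ∈ lifts (primalHom R) := by
  refine (mem_lifts _).2 ⟨r.map (algebraMap R ℍ[R]), ?_⟩
  rw [map_map]
  congr 1

theorem commute_C_coe_eps (f : ℍ[R[ε]][X]) : Commute (C ((ε : R[ε]) : ℍ[R[ε]])) f := by
  rw [← algebraMap_def, ← Polynomial.algebraMap_apply]
  exact Algebra.commutes _ f

theorem C_coe_eps_mul_self :
    (C ((ε : R[ε]) : ℍ[R[ε]]) * C ((ε : R[ε]) : ℍ[R[ε]]) : ℍ[R[ε]][X]) = 0 := by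
  rw [← C_mul, ← coe_mul, eps_mul_eps, coe_zero (R := R[ε]), C_0]

theorem eq_of_C_coe_eps_mul_eq {f g : ℍ[R[ε]][X]} (hf : f ∈ lifts (primalHom R))
    (hg : g ∈ lifts (primalHom R))
    (h : C ((ε : R[ε]) : ℍ[R[ε]]) * f = C ((ε : R[ε]) : ℍ[R[ε]]) * g) : f = g := by
  rw [lifts_iff_coeff_lifts] at hf hg
  refine Polynomial.ext fun n => ?_
  obtain ⟨a, ha⟩ := hf n
  obtain ⟨b, hb⟩ := hg n
  have hn := congrArg (coeff · n) h
  simp only [coeff_C_mul, ← ha, ← hb, coe_eps_mul_primalHom] at hn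
  rw [← ha, ← hb, inr_injective ((dualNumberEquiv (R := R)).symm.injective hn)]

end Quaternion

theorem pQ_eq_primalHom (q : ℍ[ℝ]) : pQ q = primalHom ℝ q := rfl

theorem eQ_one_eq_coe_eps : eQ 1 = ((ε : ℝ[ε]) : ℍ[ℝ[ε]]) := rfl

theorem mem_lifts_of_coeff_eq_pQ {f : ℍ[ℝ[ε]][X]} (hf : ∀ n, ∃ q, f.coeff n = pQ q) :
    f ∈ lifts (primalHom ℝ) :=
  (lifts_iff_coeff_lifts f).2 fun n =>
    (hf n).imp fun q hq => (hq.trans (pQ_eq_primalHom q)).symm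

-- Generic `star` lemmas do not apply to the `Star` instance that `pconj` uses on `ℍ[ℝ[ε]]`
-- (instance unification fails), so the properties of `pconj` are transported from `starAntiHom`.
theorem pconj_eq_unop_starAntiHom (f : ℍ[ℝ[ε]][X]) : pconj f = unop (starAntiHom _ f) :=
  (unop_starAntiHom_eq_sum f).symm

theorem pconj_add (f g : ℍ[ℝ[ε]][X]) : pconj (f + g) = pconj f + pconj g := by
  simp only [pconj_eq_unop_starAntiHom, map_add, unop_add]

theorem pconj_mul (f g : ℍ[ℝ[ε]][X]) : pconj (f * g) = pconj g * pconj f := by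
  simp only [pconj_eq_unop_starAntiHom, map_mul, unop_mul]

theorem pconj_C (a : ℍ[ℝ[ε]]) : pconj (C a) = C (star a) := by
  rw [pconj_eq_unop_starAntiHom, unop_starAntiHom_C]

theorem pconj_C_eQ_one_mul (f : ℍ[ℝ[ε]][X]) : pconj (C (eQ 1) * f) = C (eQ 1) * pconj f := by
  rw [pconj_mul, pconj_C, eQ_one_eq_coe_eps, star_coe, (commute_C_coe_eps _).eq]

theorem pconj_mem_lifts {f : ℍ[ℝ[ε]][X]} (hf : f ∈ lifts (primalHom ℝ)) :
    pconj f ∈ lifts (primalHom ℝ) := by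
  rw [lifts_iff_coeff_lifts] at hf ⊢
  intro n
  obtain ⟨q, hq⟩ := hf n
  refine ⟨star q, ?_⟩
  rw [← star_primalHom, hq, pconj_eq_unop_starAntiHom, coeff_unop_starAntiHom]

theorem null_cone_norm_divisibility_general
    (p d c : Polynomial (Quaternion (DualNumber ℝ))) (s : Polynomial ℝ)
    (hp_primal : ∀ n, ∃ q : Quaternion ℝ, p.coeff n = pQ q)
    (hd_primal : ∀ n, ∃ q : Quaternion ℝ, d.coeff n = pQ q)
    (hc : c = p + C (eQ 1) * d)
    (hnorm : p * pconj p = (s ^ 2).map (algebraMap ℝ (Quaternion (DualNumber ℝ))))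
    (h_fact : ∃ F₁ F₂ : Polynomial (Quaternion (DualNumber ℝ)),
      c = F₁ * F₂ ∧ F₁.degree = 1 ∧ F₂.degree = 1 ∧
      ∃ lam₁ lam₂ : Polynomial ℝ,
        F₁ * pconj F₁ = s.map (algebraMap ℝ (Quaternion (DualNumber ℝ)))
          + C (eQ 1) * lam₁.map (algebraMap ℝ (Quaternion (DualNumber ℝ))) ∧
        F₂ * pconj F₂ = s.map (algebraMap ℝ (Quaternion (DualNumber ℝ)))
          + C (eQ 1) * lam₂.map (algebraMap ℝ (Quaternion (DualNumber ℝ)))) :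
    ∃ μ : Polynomial ℝ,
      p * pconj d + d * pconj p
        = (s * μ).map (algebraMap ℝ (Quaternion (DualNumber ℝ))) := by
  obtain ⟨F₁, F₂, hcF, -, -, lam₁, lam₂, hF₁, hF₂⟩ := h_fact
  have hε : ∀ f, Commute (C (eQ 1)) f := commute_C_coe_eps
  have hε2 : C (eQ 1) * C (eQ 1) = 0 := C_coe_eps_mul_self
  have h_norm_primal_dual :
      c * pconj c = p * pconj p + C (eQ 1) * (p * pconj d + d * pconj p) := by
    rw [hc, pconj_add, pconj_C_eQ_one_mul, add_mul_add_of_mul_self_eq_zero hε hε2]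
  have hF₂_central : Commute F₁ (F₂ * pconj F₂) := by
    rw [hF₂]
    exact ((commute_map_algebraMap s F₁).add_left
      ((hε F₁).mul_left (commute_map_algebraMap lam₂ F₁))).symm
  have h_norm_factors : c * pconj c = (s ^ 2).map (algebraMap ℝ (Quaternion (DualNumber ℝ)))
      + C (eQ 1) * (s * (lam₁ + lam₂)).map (algebraMap ℝ (Quaternion (DualNumber ℝ))) := by
    rw [hcF, pconj_mul, mul_mul_mul_eq_of_commute hF₂_central, hF₂, hF₁,
      add_mul_add_of_mul_self_eq_zero hε hε2, (commute_map_algebraMap lam₂ _).eq,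
      Polynomial.map_pow, Polynomial.map_mul, Polynomial.map_add, sq]
    simp only [mul_add]
  have hp := mem_lifts_of_coeff_eq_pQ hp_primal
  have hd := mem_lifts_of_coeff_eq_pQ hd_primal
  refine ⟨lam₁ + lam₂, eq_of_C_coe_eps_mul_eq
    (add_mem (mul_mem hp (pconj_mem_lifts hd)) (mul_mem hd (pconj_mem_lifts hp)))
    (map_algebraMap_mem_lifts_primalHom _) ?_⟩
  rw [← hnorm] at h_norm_factors
  exact add_left_cancel (h_norm_primal_dual.symm.trans h_norm_factors)

/-- If `c = p + εd` is quadratic, `p` has no real factor of positive degree,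
`p·conj p = s²` for an irreducible monic quadratic `s ∈ ℝ[t]`, and `c = F₁F₂`
with linear factors whose norms are `s + ελᵢ`, `λᵢ ∈ ℝ[t]`, then `s` divides
the real polynomial `p·conj d + d·conj p` (the dual part of the norm of `c`). -/
theorem null_cone_norm_divisibility
    (p d c : Polynomial (Quaternion (DualNumber ℝ))) (s : Polynomial ℝ)
    (hp_primal : ∀ n, ∃ q : Quaternion ℝ, p.coeff n = pQ q)
    (hd_primal : ∀ n, ∃ q : Quaternion ℝ, d.coeff n = pQ q)
    (hc : c = p + C (eQ 1) * d) (hc_deg : c.degree = 2)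
    (hp_nofactor : ∀ r : Polynomial ℝ, 0 < r.degree →
      ¬ r.map (algebraMap ℝ (Quaternion (DualNumber ℝ))) ∣ p)
    (hs_monic : s.Monic) (hs_deg : s.degree = 2) (hs_irr : Irreducible s)
    (hnorm : p * pconj p = (s ^ 2).map (algebraMap ℝ (Quaternion (DualNumber ℝ))))
    (h_fact : ∃ F₁ F₂ : Polynomial (Quaternion (DualNumber ℝ)),
      c = F₁ * F₂ ∧ F₁.degree = 1 ∧ F₂.degree = 1 ∧
      ∃ lam₁ lam₂ : Polynomial ℝ,
        F₁ * pconj F₁ = s.map (algebraMap ℝ (Quaternion (DualNumber ℝ)))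
          + C (eQ 1) * lam₁.map (algebraMap ℝ (Quaternion (DualNumber ℝ))) ∧
        F₂ * pconj F₂ = s.map (algebraMap ℝ (Quaternion (DualNumber ℝ)))
          + C (eQ 1) * lam₂.map (algebraMap ℝ (Quaternion (DualNumber ℝ)))) :
    ∃ μ : Polynomial ℝ,
      p * pconj d + d * pconj p
        = (s * μ).map (algebraMap ℝ (Quaternion (DualNumber ℝ))) :=
  null_cone_norm_divisibility_general p d c s hp_primal hd_primal hc hnorm h_fact

end
end
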